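/- arXiv:1507.02011 — 2 statements merged into one kernel-verified Lean document; each statement's English description precedes it below -/
import Mathlib

section
/- With λ_i = 1/(θ·E[g_i(x,y)]) for each i (the minimizer of the expected loss E[θ∑_i λ_i g_i(x,y) − ∑_i log λ_i]), the misclassification probability of the ensemble prediction rule satisfies, for every p > 1: P(error) ≤ m^{1/p} · ( E[ ( ∑_{i=1}^m g_i(x,−y) / E[g_i(x,y)] )^{−1/(p−1)} ] )^{(p−1)/p}, where the 'error' event is {(x,y) : y · ∑_{i=1}^m λ_i (g_i(x,−1) − g_i(x,1)) < 0}. -/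
/-!
Write `T = ∑ᵢ gᵢ(x,y)/E[gᵢ]` and `S = ∑ᵢ gᵢ(x,-y)/E[gᵢ]`. Since `λᵢ` is proportional to `1/E[gᵢ]`,
an error means `S < T`, so the error indicator is at most `T^{1/p} S^{-1/p}`. Hölder's inequality
with exponents `p` and `p/(p-1)` bounds the expectation of this product by
`E[T]^{1/p} E[S^{-1/(p-1)}]^{(p-1)/p}`, and `E[T] = m`.
-/

open MeasureTheory

open scoped ENNReal

theorem ENNReal.one_le_rpow_mul_rpow_neg_of_lt {a b : ℝ≥0∞} (hab : a < b) {r : ℝ} (hr : 0 < r) :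
    1 ≤ b ^ r * a ^ (-r) := by
  rw [ENNReal.rpow_neg, ← div_eq_mul_inv, ENNReal.le_div_iff_mul_le
    (Or.inr (ENNReal.rpow_pos_of_nonneg (pos_of_gt hab) hr.le).ne')
    (Or.inl (ENNReal.rpow_ne_top_of_nonneg hr.le hab.ne_top)), one_mul]
  exact ENNReal.rpow_le_rpow hab.le hr.le

theorem measure_lt_le_lintegral_rpow_mul_lintegral_rpow {Ω : Type*} [MeasurableSpace Ω]
    (P : Measure Ω) {S T : Ω → ℝ≥0∞} (hS : AEMeasurable S P) (hT : AEMeasurable T P)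
    {p : ℝ} (hp : 1 < p) :
    P {ω | S ω < T ω}
      ≤ (∫⁻ ω, T ω ∂P) ^ (1 / p) * (∫⁻ ω, S ω ^ (-1 / (p - 1)) ∂P) ^ ((p - 1) / p) := by
  have hp0 : 0 < p := zero_lt_one.trans hp
  have hpq : p.HolderConjugate (p / (p - 1)) := Real.HolderConjugate.conjExponent hp
  set f : Ω → ℝ≥0∞ := fun ω => T ω ^ (1 / p)
  set h : Ω → ℝ≥0∞ := fun ω => S ω ^ (-(1 / p))
  have hf_pow : ∀ ω, f ω ^ p = T ω := fun ω => by
    rw [← ENNReal.rpow_mul, one_div_mul_cancel hp0.ne', ENNReal.rpow_one]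
  have hh_pow : ∀ ω, h ω ^ (p / (p - 1)) = S ω ^ (-1 / (p - 1)) := fun ω => by
    rw [← ENNReal.rpow_mul]
    congr 1
    field_simp [hp0.ne', (sub_pos.2 hp).ne']
  calc P {ω | S ω < T ω}
      ≤ P {ω | 1 ≤ (f * h) ω} :=
        measure_mono fun ω hω => ENNReal.one_le_rpow_mul_rpow_neg_of_lt hω (by positivity)
    _ ≤ ∫⁻ ω, (f * h) ω ∂P := by
        simpa only [one_mul] using
          mul_meas_ge_le_lintegral₀ ((hT.pow_const _).mul (hS.pow_const _)) 1
    _ ≤ (∫⁻ ω, f ω ^ p ∂P) ^ (1 / p)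
          * (∫⁻ ω, h ω ^ (p / (p - 1)) ∂P) ^ (1 / (p / (p - 1))) :=
        ENNReal.lintegral_mul_le_Lp_mul_Lq P hpq (hT.pow_const _) (hS.pow_const _)
    _ = _ := by simp only [hf_pow, hh_pow, one_div_div]

theorem sum_div_neg_lt_sum_div_of_mul_sum_neg {ι : Type*} (s : Finset ι) (u : ι → ℝ → ℝ)
    (μ : ι → ℝ) {c : ℝ} (hc : 0 < c) {y : ℝ} (hy : y = 1 ∨ y = -1)
    (h : y * ∑ i ∈ s, c / μ i * (u i (-1) - u i 1) < 0) :
    ∑ i ∈ s, u i (-y) / μ i < ∑ i ∈ s, u i y / μ i := by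
  have hsum : ∑ i ∈ s, c / μ i * (u i (-1) - u i 1)
      = c * (∑ i ∈ s, u i (-1) / μ i - ∑ i ∈ s, u i 1 / μ i) := by
    rw [← Finset.sum_sub_distrib, Finset.mul_sum]
    exact Finset.sum_congr rfl fun i _ => by ring
  rw [hsum] at h
  rcases hy with rfl | rfl
  · nlinarith
  · simp only [neg_neg]; nlinarith

theorem lintegral_ofReal_sum_div_integral_eq_card {Ω ι : Type*} [MeasurableSpace Ω] [Fintype ι]
    (P : Measure Ω) (f : ι → Ω → ℝ) (hf : ∀ i, Integrable (f i) P) (hf0 : ∀ i, 0 ≤ᵐ[P] f i)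
    (μ : ι → ℝ) (hμ : ∀ i, ∫ ω, f i ω ∂P = μ i) (hμ0 : ∀ i, 0 < μ i) :
    ∫⁻ ω, ENNReal.ofReal (∑ i, f i ω / μ i) ∂P = Fintype.card ι := by
  have hint : ∀ i, Integrable (fun ω => f i ω / μ i) P := fun i => (hf i).div_const _
  have hnonneg : 0 ≤ᵐ[P] fun ω => ∑ i, f i ω / μ i := by
    filter_upwards [ae_all_iff.2 hf0] with ω hω
    exact Finset.sum_nonneg fun i _ => div_nonneg (hω i) (hμ0 i).le
  rw [← ofReal_integral_eq_lintegral_ofReal (integrable_finsetSum _ fun i _ => hint i) hnonneg,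
    integral_finsetSum _ fun i _ => hint i]
  simp [integral_div, hμ, (hμ0 _).ne']

theorem stmt4_general {Ω 𝒳 : Type*} [MeasurableSpace Ω] [MeasurableSpace 𝒳]
    (P : Measure Ω)
    (ξ : Ω → 𝒳) (hξ : Measurable ξ)
    (y : Ω → ℝ) (hy : Measurable y) (hy1 : ∀ ω, y ω = 1 ∨ y ω = -1)
    {m : ℕ} (g : Fin m → 𝒳 → ℝ → ℝ)
    (hgmeas : ∀ i, Measurable (Function.uncurry (g i)))
    (hgpos : ∀ i x s, 0 < g i x s)
    (θ : ℝ) (hθ : 0 < θ)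
    (μ : Fin m → ℝ) (hμint : ∀ i, Integrable (fun ω => g i (ξ ω) (y ω)) P)
    (hμ : ∀ i, μ i = ∫ ω, g i (ξ ω) (y ω) ∂P) (hμpos : ∀ i, 0 < μ i)
    (lam : Fin m → ℝ) (hlamdef : ∀ i, lam i = 1 / (θ * μ i))
    (p : ℝ) (hp : 1 < p) :
    P {ω : Ω | y ω * ∑ i, lam i * (g i (ξ ω) (-1) - g i (ξ ω) 1) < 0}
      ≤ (m : ENNReal) ^ (1 / p) *
        (∫⁻ ω, (ENNReal.ofReal (∑ i, g i (ξ ω) (-(y ω)) / μ i)) ^ (-1 / (p - 1)) ∂P) ^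
          ((p - 1) / p) := by
  have hlam : lam = fun i => θ⁻¹ / μ i :=
    funext fun i => by rw [hlamdef, one_div, mul_inv, div_eq_mul_inv]
  subst hlam
  have hmeas : ∀ (i : Fin m) {c : Ω → ℝ}, Measurable c → Measurable (fun ω => g i (ξ ω) (c ω)) :=
    fun i _ hc => (hgmeas i).comp (hξ.prodMk hc)
  have hloss : ∀ {c : Ω → ℝ}, Measurable c →
      AEMeasurable (fun ω => ENNReal.ofReal (∑ i, g i (ξ ω) (c ω) / μ i)) P := fun hc =>
    (ENNReal.measurable_ofReal.comp
      (Finset.measurable_sum _ fun i _ => (hmeas i hc).div_const _)).aemeasurable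
  calc P {ω | y ω * ∑ i, θ⁻¹ / μ i * (g i (ξ ω) (-1) - g i (ξ ω) 1) < 0}
      ≤ P {ω | ENNReal.ofReal (∑ i, g i (ξ ω) (-(y ω)) / μ i)
          < ENNReal.ofReal (∑ i, g i (ξ ω) (y ω) / μ i)} := measure_mono fun ω hω =>
        (ENNReal.ofReal_lt_ofReal_iff_of_nonneg (Finset.sum_nonneg fun i _ =>
          (div_pos (hgpos _ _ _) (hμpos i)).le)).2 <|
          sum_div_neg_lt_sum_div_of_mul_sum_neg _ (fun i => g i (ξ ω)) μ (inv_pos.2 hθ) (hy1 ω) hω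
    _ ≤ _ := measure_lt_le_lintegral_rpow_mul_lintegral_rpow P (hloss hy.neg) (hloss hy) hp
    _ = _ := by
      rw [lintegral_ofReal_sum_div_integral_eq_card P _ hμint
        (fun i => Filter.Eventually.of_forall fun ω => (hgpos _ _ _).le) μ
        (fun i => (hμ i).symm) hμpos, Fintype.card_fin]
      rfl

/-- Theorem 3 (prediction error bound): with the expected-loss-minimizing weights
`λᵢ = 1/(θ·E[gᵢ(x,y)])`, for every `p > 1`,
`P(error) ≤ m^{1/p} · (E[(∑ᵢ gᵢ(x,−y)/E[gᵢ(x,y)])^{−1/(p−1)}])^{(p−1)/p}`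
in the extended nonnegative reals, where the error event is
`{(x,y) : y · ∑ᵢ λᵢ (gᵢ(x,−1) − gᵢ(x,1)) < 0}`. -/
theorem stmt4 {Ω 𝒳 : Type*} [MeasurableSpace Ω] [MeasurableSpace 𝒳]
    (P : Measure Ω) [IsProbabilityMeasure P]
    (ξ : Ω → 𝒳) (hξ : Measurable ξ)
    (y : Ω → ℝ) (hy : Measurable y) (hy1 : ∀ ω, y ω = 1 ∨ y ω = -1)
    {m : ℕ} (g : Fin m → 𝒳 → ℝ → ℝ)
    (hgmeas : ∀ i, Measurable (Function.uncurry (g i)))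
    (hgpos : ∀ i x s, 0 < g i x s)
    (θ : ℝ) (hθ : 0 < θ)
    (μ : Fin m → ℝ) (hμint : ∀ i, Integrable (fun ω => g i (ξ ω) (y ω)) P)
    (hμ : ∀ i, μ i = ∫ ω, g i (ξ ω) (y ω) ∂P) (hμpos : ∀ i, 0 < μ i)
    (lam : Fin m → ℝ) (hlamdef : ∀ i, lam i = 1 / (θ * μ i))
    (p : ℝ) (hp : 1 < p) :
    P {ω : Ω | y ω * ∑ i, lam i * (g i (ξ ω) (-1) - g i (ξ ω) 1) < 0}
      ≤ (m : ENNReal) ^ (1 / p) *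
        (∫⁻ ω, (ENNReal.ofReal (∑ i, g i (ξ ω) (-(y ω)) / μ i)) ^ (-1 / (p - 1)) ∂P) ^
          ((p - 1) / p) :=
  stmt4_general P ξ hξ y hy hy1 g hgmeas hgpos θ hθ μ hμint hμ hμpos lam hlamdef p hp
end

section
/- For any nonnegative weights λ_1, …, λ_m (not all zero) such that ∑_{i=1}^m λ_i g_i(x,−y) > 0 almost surely, and any p > 1, the misclassification probability of the ensemble prediction rule satisfies P(error) ≤ ( E[ ∑_{i=1}^m λ_i g_i(x,y) ] )^{1/p} · ( E[ ( ∑_{i=1}^m λ_i g_i(x,−y) )^{−1/(p−1)} ] )^{(p−1)/p}, where the 'error' event is {(x,y) : y · ∑_{i=1}^m λ_i (g_i(x,−1) − g_i(x,1)) < 0}. -/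
/-!
On the error event the ensemble loss `F = ∑ λᵢ gᵢ(x,y)` of the true label is at least the loss
`G = ∑ λᵢ gᵢ(x,−y)` of the wrong one, so there `1 ≤ F^{1/p} G^{-1/p}`. Markov's inequality bounds
the error probability by `E[F^{1/p} G^{-1/p}]`, and Hölder's inequality with exponents `p` and
`p/(p-1)` splits this expectation into the two factors of the bound.
-/

open MeasureTheory
open scoped ENNReal

theorem measure_le_lintegral_of_ae_one_le {α : Type*} [MeasurableSpace α] {μ : Measure α}
    {s : Set α} {h : α → ℝ≥0∞} (hh : AEMeasurable h μ) (hs : ∀ᵐ ω ∂μ, ω ∈ s → 1 ≤ h ω) :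
    μ s ≤ ∫⁻ ω, h ω ∂μ :=
  calc μ s ≤ μ {ω | 1 ≤ h ω} := measure_mono_ae hs
    _ ≤ ∫⁻ ω, h ω ∂μ := by simpa using mul_meas_ge_le_lintegral₀ hh 1

theorem ENNReal.one_le_rpow_mul_rpow_neg {a b : ℝ≥0∞} {r : ℝ} (hr : 0 ≤ r) (hb₀ : b ≠ 0)
    (hb : b ≠ ∞) (hba : b ≤ a) : 1 ≤ a ^ r * b ^ (-r) :=
  calc 1 = b ^ r * b ^ (-r) := by
        rw [← ENNReal.rpow_add _ _ hb₀ hb, add_neg_cancel, ENNReal.rpow_zero]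
    _ ≤ a ^ r * b ^ (-r) := by gcongr

theorem lintegral_rpow_mul_rpow_neg_le {α : Type*} [MeasurableSpace α] (μ : Measure α)
    {f g : α → ℝ≥0∞} (hf : AEMeasurable f μ) (hg : AEMeasurable g μ) {p : ℝ} (hp : 1 < p) :
    ∫⁻ ω, f ω ^ (1 / p) * g ω ^ (-(1 / p)) ∂μ
      ≤ (∫⁻ ω, f ω ∂μ) ^ (1 / p) * (∫⁻ ω, g ω ^ (-1 / (p - 1)) ∂μ) ^ ((p - 1) / p) := by
  have hp₀ : p ≠ 0 := by positivity
  have hp₁ : p - 1 ≠ 0 := by linarith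
  have hpow_f : ∀ ω, (f ω ^ (1 / p)) ^ p = f ω := fun ω => by
    rw [← ENNReal.rpow_mul, one_div_mul_cancel hp₀, ENNReal.rpow_one]
  have hpow_g : ∀ ω, (g ω ^ (-(1 / p))) ^ (p / (p - 1)) = g ω ^ (-1 / (p - 1)) := fun ω => by
    rw [← ENNReal.rpow_mul]
    congr 1
    field_simp
  have hq : 1 / (p / (p - 1)) = (p - 1) / p := by field_simp
  simpa only [Real.conjExponent, Pi.mul_apply, hpow_f, hpow_g, hq] using
    ENNReal.lintegral_mul_le_Lp_mul_Lq μ (Real.HolderConjugate.conjExponent hp)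
      (hf.pow_const (1 / p)) (hg.pow_const (-(1 / p)))

theorem measure_le_lintegral_rpow_mul_lintegral_rpow_neg {α : Type*} [MeasurableSpace α]
    {μ : Measure α} {s : Set α} {F G : α → ℝ} (hF : AEMeasurable F μ) (hG : AEMeasurable G μ)
    (hs : ∀ᵐ ω ∂μ, ω ∈ s → 0 < G ω ∧ G ω ≤ F ω) {p : ℝ} (hp : 1 < p) :
    μ s ≤ (∫⁻ ω, ENNReal.ofReal (F ω) ∂μ) ^ (1 / p) *
      (∫⁻ ω, ENNReal.ofReal (G ω) ^ (-1 / (p - 1)) ∂μ) ^ ((p - 1) / p) := by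
  have hF' := hF.ennreal_ofReal
  have hG' := hG.ennreal_ofReal
  calc μ s ≤ ∫⁻ ω, ENNReal.ofReal (F ω) ^ (1 / p) * ENNReal.ofReal (G ω) ^ (-(1 / p)) ∂μ := by
        refine measure_le_lintegral_of_ae_one_le
          ((hF'.pow_const _).mul (hG'.pow_const _)) ?_
        filter_upwards [hs] with ω hω hωs
        obtain ⟨hG₀, hGF⟩ := hω hωs
        exact ENNReal.one_le_rpow_mul_rpow_neg (by positivity) (ENNReal.ofReal_pos.2 hG₀).ne'
          ENNReal.ofReal_ne_top (ENNReal.ofReal_le_ofReal hGF)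
    _ ≤ _ := lintegral_rpow_mul_rpow_neg_le μ hF' hG' hp

theorem apply_neg_lt_apply_of_mul_sub_neg {S : ℝ → ℝ} {t : ℝ} (ht : t = 1 ∨ t = -1)
    (h : t * (S (-1) - S 1) < 0) : S (-t) < S t := by
  rcases ht with rfl | rfl <;> norm_num at h ⊢ <;> linarith

theorem stmt5_general {Ω 𝒳 : Type*} [MeasurableSpace Ω] [MeasurableSpace 𝒳]
    (P : Measure Ω)
    (ξ : Ω → 𝒳) (hξ : Measurable ξ)
    (y : Ω → ℝ) (hy : Measurable y) (hy1 : ∀ ω, y ω = 1 ∨ y ω = -1)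
    {m : ℕ} (g : Fin m → 𝒳 → ℝ → ℝ)
    (hgmeas : ∀ i, Measurable (Function.uncurry (g i)))
    (lam : Fin m → ℝ)
    (hpos : ∀ᵐ ω ∂P, 0 < ∑ i, lam i * g i (ξ ω) (-(y ω)))
    (p : ℝ) (hp : 1 < p) :
    P {ω : Ω | y ω * ∑ i, lam i * (g i (ξ ω) (-1) - g i (ξ ω) 1) < 0}
      ≤ (∫⁻ ω, ENNReal.ofReal (∑ i, lam i * g i (ξ ω) (y ω)) ∂P) ^ (1 / p) *
        (∫⁻ ω, (ENNReal.ofReal (∑ i, lam i * g i (ξ ω) (-(y ω)))) ^ (-1 / (p - 1)) ∂P) ^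
          ((p - 1) / p) := by
  let S : Ω → ℝ → ℝ := fun ω s => ∑ i, lam i * g i (ξ ω) s
  have hS : ∀ t : Ω → ℝ, Measurable t → Measurable fun ω => S ω (t ω) := fun t ht =>
    Finset.measurable_sum _ fun i _ => ((hgmeas i).comp (hξ.prodMk ht)).const_mul _
  refine measure_le_lintegral_rpow_mul_lintegral_rpow_neg (hS y hy).aemeasurable
    (hS _ hy.neg).aemeasurable ?_ hp
  filter_upwards [hpos] with ω hω herr
  refine ⟨hω, (apply_neg_lt_apply_of_mul_sub_neg (S := S ω) (hy1 ω) ?_).le⟩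
  simpa only [S, mul_sub, Finset.sum_sub_distrib] using herr

/-- Prediction error bound for arbitrary nonnegative weights (not all zero) with
`∑ᵢ λᵢ gᵢ(x,−y) > 0` a.s.: for every `p > 1`,
`P(error) ≤ (E[∑ᵢ λᵢ gᵢ(x,y)])^{1/p} · (E[(∑ᵢ λᵢ gᵢ(x,−y))^{−1/(p−1)}])^{(p−1)/p}`
in the extended nonnegative reals. -/
theorem stmt5 {Ω 𝒳 : Type*} [MeasurableSpace Ω] [MeasurableSpace 𝒳]
    (P : Measure Ω) [IsProbabilityMeasure P]
    (ξ : Ω → 𝒳) (hξ : Measurable ξ)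
    (y : Ω → ℝ) (hy : Measurable y) (hy1 : ∀ ω, y ω = 1 ∨ y ω = -1)
    {m : ℕ} (g : Fin m → 𝒳 → ℝ → ℝ)
    (hgmeas : ∀ i, Measurable (Function.uncurry (g i)))
    (hgnonneg : ∀ i x s, 0 ≤ g i x s)
    (lam : Fin m → ℝ) (hlam : ∀ i, 0 ≤ lam i) (hlamne : ∃ i, lam i ≠ 0)
    (hpos : ∀ᵐ ω ∂P, 0 < ∑ i, lam i * g i (ξ ω) (-(y ω)))
    (p : ℝ) (hp : 1 < p) :
    P {ω : Ω | y ω * ∑ i, lam i * (g i (ξ ω) (-1) - g i (ξ ω) 1) < 0}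
      ≤ (∫⁻ ω, ENNReal.ofReal (∑ i, lam i * g i (ξ ω) (y ω)) ∂P) ^ (1 / p) *
        (∫⁻ ω, (ENNReal.ofReal (∑ i, lam i * g i (ξ ω) (-(y ω)))) ^ (-1 / (p - 1)) ∂P) ^
          ((p - 1) / p) :=
  stmt5_general P ξ hξ y hy hy1 g hgmeas lam hpos p hp
end
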